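/- For natural numbers n and j and any complex number a, ∑_{k=0}^{n} (-n)_k (a)_k 2^k / ((-2n-j)_k k!) = (2^{2n+j} n! / (2n+j)!) · ∑_{r=0}^{j} (-1)^r C(j,r) (a/2 + 1/2 - r/2)_{n+j}. -/

import Mathlib

/-!
The alternating binomial sum on the right is the `j`-th backward difference of
`x ↦ ((x + 1) / 2)_(n + j)` at `a`. Both sides are polynomials in `a`, and one difference in `a`
turns either side at `(n + 1, j)` into `2 (n + 1) / (2 n + j + 2)` times the same side at
`(n, j + 1)`; for the series because `(a + 1)_(k + 1) - (a)_(k + 1) = (k + 1) (a + 1)_k`.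
So, by induction on `n`, the difference of the two sides is a `1`-periodic polynomial, hence
constant, and it vanishes at `a = 0`: there the series is `1`, and so is the right side, by a
two-step recursion in `j` coming from
`((x + 1) / 2)_(m + 1) - ((x - 1) / 2)_(m + 1) = (m + 1) ((x + 1) / 2)_m`
and starting from `(1 / 2)_n = (2 n)! / (4 ^ n n!)`. For `n = 0` the right side is the `j`-th
difference of a polynomial of degree `j`, a constant.
-/

open Finset

/-- The Pochhammer symbol (rising factorial) `(x)_k = x (x+1) ⋯ (x+k-1)`. -/
noncomputable def poch (x : ℂ) (k : ℕ) : ℂ := (ascPochhammer ℂ k).eval x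

open Polynomial Nat
open scoped fwdDiff

section fwdDiff

variable {M G : Type*} [AddCommMonoid M] [AddCommGroup G] (h : M)

lemma fwdDiff_iter_succ_apply (f : M → G) (j : ℕ) (y : M) :
    Δ_[h] ^[j + 1] f y = Δ_[h] ^[j] f (y + h) - Δ_[h] ^[j] f y := by
  rw [Function.iterate_succ_apply']
  rfl

lemma fwdDiff_iter_sub (f g : M → G) (j : ℕ) :
    Δ_[h] ^[j] (f - g) = Δ_[h] ^[j] f - Δ_[h] ^[j] g := by
  simp only [← fwdDiff_aux.coe_fwdDiffₗ_pow, map_sub]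

end fwdDiff

lemma fwdDiff_iter_sub_natCast_eq_sum {R : Type*} [CommRing R] (f : R → R) (j : ℕ) (a : R) :
    Δ_[1] ^[j] f (a - j) = ∑ r ∈ range (j + 1), (-1) ^ r * (j.choose r : R) * f (a - r) := by
  rw [fwdDiff_iter_eq_sum_shift, ← sum_range_reflect]
  refine sum_congr rfl fun r hr => ?_
  have hr : r ≤ j := Nat.lt_succ_iff.mp (mem_range.mp hr)
  rw [Nat.add_sub_cancel, Nat.sub_sub_self hr, Nat.choose_symm hr, zsmul_eq_mul, nsmul_eq_mul,
    Nat.cast_sub hr]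
  push_cast
  ring_nf

namespace Polynomial

variable {R : Type*} [CommRing R]

lemma exists_fwdDiff_iter_eval_eq_eval (P : R[X]) (h : R) (j : ℕ) :
    ∃ Q : R[X], Δ_[h] ^[j] P.eval = Q.eval := by
  induction j with
  | zero => exact ⟨P, rfl⟩
  | succ j ih =>
    obtain ⟨Q, hQ⟩ := ih
    refine ⟨Q.comp (X + C h) - Q, ?_⟩
    ext x
    rw [Function.iterate_succ_apply', hQ]
    simp [fwdDiff]

lemma eval_eq_eval_zero_of_eval_add_one [IsDomain R] [CharZero R] (P : R[X])
    (hP : ∀ x, P.eval (x + 1) = P.eval x) (x : R) : P.eval x = P.eval 0 := by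
  have hnat : ∀ m : ℕ, P.eval (m : R) = P.eval 0 := by
    intro m
    induction m with
    | zero => simp
    | succ m ih => rw [Nat.cast_succ, hP, ih]
  suffices P - C (P.eval 0) = 0 by simpa [sub_eq_zero] using congrArg (eval x) this
  refine eq_zero_of_infinite_isRoot _ (Set.infinite_of_injective_forall_mem
    Nat.cast_injective fun m => ?_)
  simp [hnat m]

end Polynomial

lemma poch_zero (x : ℂ) : poch x 0 = 1 := by simp [poch]

lemma poch_succ (x : ℂ) (k : ℕ) : poch x (k + 1) = x * poch (x + 1) k := by
  simp [poch, ascPochhammer_succ_left, eval_comp]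

lemma poch_succ' (x : ℂ) (k : ℕ) : poch x (k + 1) = poch x k * (x + k) :=
  ascPochhammer_succ_eval k x

lemma poch_add_one_sub (x : ℂ) (k : ℕ) :
    poch (x + 1) (k + 1) - poch x (k + 1) = (k + 1) * poch (x + 1) k := by
  rw [poch_succ', poch_succ]
  ring

lemma poch_half_mul (n : ℕ) : poch (1 / 2) n * 2 ^ (2 * n) * n ! = (2 * n)! := by
  induction n with
  | zero => simp [poch_zero]
  | succ n ih =>
    rw [poch_succ', show 2 * (n + 1) = 2 * n + 1 + 1 by ring, Nat.factorial_succ,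
      Nat.factorial_succ, Nat.factorial_succ]
    push_cast
    rw [← ih]
    ring

lemma poch_half_succ_mul (n : ℕ) :
    poch (1 / 2) (n + 1) * 2 ^ (2 * n + 1) * n ! = (2 * n + 1)! := by
  rw [poch_succ', Nat.factorial_succ]
  push_cast
  rw [← poch_half_mul]
  ring

/-- `₂F₁(-n, a; c; z)`. -/
noncomputable def terminatingHyp2F1 (n : ℕ) (a c z : ℂ) : ℂ :=
  ∑ k ∈ range (n + 1), poch (-(n : ℂ)) k * poch a k * z ^ k / (poch c k * k !)

lemma terminatingHyp2F1_zero (a c z : ℂ) : terminatingHyp2F1 0 a c z = 1 := by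
  simp [terminatingHyp2F1, poch_zero]

lemma terminatingHyp2F1_at_zero (n : ℕ) (c z : ℂ) : terminatingHyp2F1 n 0 c z = 1 := by
  rw [terminatingHyp2F1, sum_range_succ']
  simp [poch_succ, poch_zero]

lemma exists_terminatingHyp2F1_eq_eval (n : ℕ) (c z : ℂ) :
    ∃ P : ℂ[X], ∀ a, terminatingHyp2F1 n a c z = P.eval a :=
  ⟨∑ k ∈ range (n + 1),
      C (poch (-(n : ℂ)) k * z ^ k / (poch c k * k !)) * ascPochhammer ℂ k, fun a => by
      simp only [terminatingHyp2F1, eval_finsetSum, eval_mul, eval_C, poch]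
      exact sum_congr rfl fun k _ => by ring⟩

lemma terminatingHyp2F1_add_one_sub (n : ℕ) (a c z : ℂ) :
    terminatingHyp2F1 (n + 1) (a + 1) c z - terminatingHyp2F1 (n + 1) a c z
      = -(n + 1) * z / c * terminatingHyp2F1 n (a + 1) (c + 1) z := by
  rw [terminatingHyp2F1, terminatingHyp2F1, terminatingHyp2F1, ← sum_sub_distrib,
    sum_range_succ', mul_sum]
  simp only [poch_zero, sub_self, add_zero]
  refine sum_congr rfl fun k _ => ?_
  have hpoch := poch_add_one_sub a k
  rw [poch_succ (-_), poch_succ c, Nat.factorial_succ,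
    show -((n + 1 : ℕ) : ℂ) + 1 = -n by push_cast; ring]
  have hk : (k + 1 : ℂ) ≠ 0 := Nat.cast_add_one_ne_zero k
  rw [← sub_div]
  push_cast
  field_simp
  linear_combination (-(poch (-n) k * z ^ (k + 1)) / (c * poch (c + 1) k * k !)) * hpoch

noncomputable def halfPoch (m : ℕ) : ℂ[X] :=
  (ascPochhammer ℂ m).comp (C 2⁻¹ * X + C 2⁻¹)

lemma eval_halfPoch (m : ℕ) (x : ℂ) : (halfPoch m).eval x = poch ((x + 1) / 2) m := by
  simp only [halfPoch, eval_comp, eval_add, eval_mul, eval_C, eval_X, poch]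
  ring_nf

lemma natDegree_halfPoch (m : ℕ) : (halfPoch m).natDegree = m := by
  rw [halfPoch, natDegree_comp, ascPochhammer_natDegree, natDegree_linear (by norm_num), mul_one]

lemma leadingCoeff_halfPoch (m : ℕ) : (halfPoch m).leadingCoeff = 2⁻¹ ^ m := by
  rw [halfPoch, leadingCoeff_comp (by rw [natDegree_linear (by norm_num)]; exact one_ne_zero),
    (monic_ascPochhammer ℂ m).leadingCoeff, ascPochhammer_natDegree,
    leadingCoeff_linear (by norm_num), one_mul]

lemma halfPoch_add_two_sub (m : ℕ) (x : ℂ) :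
    (halfPoch (m + 1)).eval (x + 2) - (halfPoch (m + 1)).eval x
      = (m + 1) * (halfPoch m).eval (x + 2) := by
  simp only [eval_halfPoch]
  rw [show (x + 2 + 1) / 2 = (x + 1) / 2 + 1 by ring, poch_add_one_sub]

lemma fwdDiff_iter_halfPoch_add_two_sub (j m : ℕ) (y : ℂ) :
    Δ_[1] ^[j] (halfPoch (m + 1)).eval (y + 2) - Δ_[1] ^[j] (halfPoch (m + 1)).eval y
      = (m + 1) * Δ_[1] ^[j] (halfPoch m).eval (y + 2) := by
  have hfun : (fun x => (halfPoch (m + 1)).eval (x + 2)) - (halfPoch (m + 1)).eval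
      = ((m + 1 : ℂ)) • fun x => (halfPoch m).eval (x + 2) :=
    funext fun x => halfPoch_add_two_sub m x
  have := congrFun (congrArg (Δ_[1] ^[j]) hfun) y
  rwa [fwdDiff_iter_sub, fwdDiff_iter_const_smul, Pi.sub_apply, Pi.smul_apply,
    fwdDiff_iter_comp_add 1 (halfPoch (m + 1)).eval, fwdDiff_iter_comp_add 1 (halfPoch m).eval,
    smul_eq_mul] at this

/-- The right-hand side of the theorem: `Δ_[1] ^[j] f (a - j)` is the `j`-th backward difference
of `f` at `a`. -/
noncomputable def diffHalfPoch (n j : ℕ) (a : ℂ) : ℂ :=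
  2 ^ (2 * n + j) * n ! / (2 * n + j)! * Δ_[1] ^[j] (halfPoch (n + j)).eval (a - j)

lemma diffHalfPoch_zero (j : ℕ) (a : ℂ) : diffHalfPoch 0 j a = 1 := by
  have h := (halfPoch j).fwdDiff_iter_degree_eq_factorial
  rw [natDegree_halfPoch, leadingCoeff_halfPoch] at h
  have hj : (j ! : ℂ) ≠ 0 := Nat.cast_ne_zero.2 j.factorial_ne_zero
  simp only [diffHalfPoch, mul_zero, zero_add, h, factorial_zero, cast_one, mul_one, inv_pow,
    Pi.smul_apply, Pi.natCast_apply, smul_eq_mul]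
  field_simp

lemma exists_diffHalfPoch_eq_eval (n j : ℕ) :
    ∃ P : ℂ[X], ∀ a, diffHalfPoch n j a = P.eval a := by
  obtain ⟨Q, hQ⟩ := (halfPoch (n + j)).exists_fwdDiff_iter_eval_eq_eval 1 j
  refine ⟨C ((2 : ℂ) ^ (2 * n + j) * n ! / (2 * n + j)!) * Q.comp (X - C (j : ℂ)),
    fun a => ?_⟩
  simp [diffHalfPoch, hQ, eval_comp]

lemma diffHalfPoch_add_one_sub (n j : ℕ) (a : ℂ) :
    diffHalfPoch (n + 1) j (a + 1) - diffHalfPoch (n + 1) j a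
      = 2 * (n + 1) / (2 * n + j + 2) * diffHalfPoch n (j + 1) (a + 1) := by
  have hconst : (2 : ℂ) ^ (2 * (n + 1) + j) * (n + 1)! / (2 * (n + 1) + j)!
      = 2 * (n + 1) / (2 * n + j + 2) * (2 ^ (2 * n + (j + 1)) * n ! / (2 * n + (j + 1))!) := by
    rw [show 2 * (n + 1) + j = 2 * n + (j + 1) + 1 by ring, Nat.factorial_succ,
      Nat.factorial_succ]
    have : (2 * n + j + 2 : ℂ) ≠ 0 := by exact_mod_cast (2 * n + j + 1).succ_ne_zero
    push_cast
    field_simp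
    ring
  rw [diffHalfPoch, diffHalfPoch, diffHalfPoch, ← mul_sub, hconst,
    show n + 1 + j = n + (j + 1) by ring, fwdDiff_iter_succ_apply,
    show a + 1 - ((j + 1 : ℕ) : ℂ) = a - j by push_cast; ring, sub_add_eq_add_sub, mul_assoc]

/-- `E² - 1 = Δ (Δ + 2)` for the shift `E`, applied to `halfPoch (m + 1)`, whose step-`2`
difference is `(m + 1) • halfPoch m` shifted by `2`. -/
lemma fwdDiff_iter_halfPoch_recursion (j m : ℕ) :
    Δ_[1] ^[j + 2] (halfPoch (m + 1)).eval (-j - 2)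
      = 2 * Δ_[1] ^[j + 1] (halfPoch (m + 1)).eval (-j - 1)
        - (m + 1) * Δ_[1] ^[j] (halfPoch m).eval (-j) := by
  have h1 : (-j - 2 : ℂ) + 1 = -j - 1 := by ring
  have h2 : (-j - 1 : ℂ) + 1 = -j := by ring
  have hstep2 := fwdDiff_iter_halfPoch_add_two_sub j m (-j - 2)
  rw [show (-j - 2 : ℂ) + 2 = -j by ring] at hstep2
  have hsucc₁ := fwdDiff_iter_succ_apply 1 (halfPoch (m + 1)).eval (j + 1) (-j - 2)
  have hsucc₂ := fwdDiff_iter_succ_apply 1 (halfPoch (m + 1)).eval j (-j - 2)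
  have hsucc₃ := fwdDiff_iter_succ_apply 1 (halfPoch (m + 1)).eval j (-j - 1)
  rw [h1] at hsucc₁ hsucc₂
  rw [h2] at hsucc₃
  linear_combination hsucc₁ - hsucc₂ - hsucc₃ - hstep2

lemma diffHalfPoch_at_zero_add_two (n j : ℕ) :
    (n + 1) * diffHalfPoch n (j + 2) 0
      = (2 * n + j + 3) * diffHalfPoch (n + 1) (j + 1) 0
        - (n + j + 2) * diffHalfPoch (n + 1) j 0 := by
  have hrec := fwdDiff_iter_halfPoch_recursion j (n + j + 1)
  simp only [diffHalfPoch, zero_sub]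
  rw [show n + (j + 2) = n + j + 1 + 1 by ring, show n + 1 + (j + 1) = n + j + 1 + 1 by ring,
    show n + 1 + j = n + j + 1 by ring, show 2 * n + (j + 2) = 2 * n + j + 2 by ring,
    show 2 * (n + 1) + (j + 1) = 2 * n + j + 2 + 1 by ring,
    show 2 * (n + 1) + j = 2 * n + j + 2 by ring]
  push_cast at hrec ⊢
  rw [show -(j : ℂ) - 2 = -(j + 2) by ring, show -(j : ℂ) - 1 = -(j + 1) by ring] at hrec
  rw [hrec, pow_succ 2 (2 * n + j + 2), Nat.factorial_succ (2 * n + j + 2), Nat.factorial_succ n]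
  set X1 := Δ_[1] ^[j + 1] (halfPoch (n + j + 1 + 1)).eval (-(j + 1 : ℂ))
  have hcancel : (2 * n + j + 3 : ℂ) * (2 * n + j + 3 : ℂ)⁻¹ = 1 :=
    mul_inv_cancel₀ (by exact_mod_cast (2 * n + j + 2).succ_ne_zero)
  push_cast
  rw [show (2 * n + j + 2 + 1 : ℂ) = 2 * n + j + 3 by ring]
  simp only [div_eq_mul_inv, mul_inv]
  linear_combination (-2 * (n + 1) * 2 ^ (2 * n + j + 2) * n ! * ((2 * n + j + 2)! : ℂ)⁻¹ * X1)
    * hcancel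

lemma diffHalfPoch_at_zero (n j : ℕ) : diffHalfPoch n j 0 = 1 := by
  induction j using Nat.twoStepInduction generalizing n with
  | zero =>
    simp only [diffHalfPoch, add_zero, Function.iterate_zero, id, eval_halfPoch]
    norm_num
    rw [div_mul_eq_mul_div, div_eq_one_iff_eq (Nat.cast_ne_zero.2 (Nat.factorial_ne_zero _)),
      ← poch_half_mul]
    ring
  | one =>
    simp only [diffHalfPoch, Function.iterate_one, fwdDiff, eval_halfPoch]
    norm_num
    rw [poch_succ 0, zero_mul, sub_zero, div_mul_eq_mul_div,
      div_eq_one_iff_eq (Nat.cast_ne_zero.2 (Nat.factorial_ne_zero _)), ← poch_half_succ_mul]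
    ring
  | more j ih0 ih1 =>
    have h := diffHalfPoch_at_zero_add_two n j
    rw [ih0, ih1] at h
    refine mul_left_cancel₀ (Nat.cast_add_one_ne_zero n) ?_
    linear_combination h

lemma terminatingHyp2F1_eq_diffHalfPoch (n j : ℕ) (a : ℂ) :
    terminatingHyp2F1 n a (-(2 * n : ℂ) - j) 2 = diffHalfPoch n j a := by
  induction n generalizing j a with
  | zero => rw [terminatingHyp2F1_zero, diffHalfPoch_zero]
  | succ n ih =>
    set c : ℂ := -(2 * (n + 1 : ℕ) : ℂ) - j
    obtain ⟨P, hP⟩ := exists_terminatingHyp2F1_eq_eval (n + 1) c 2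
    obtain ⟨Q, hQ⟩ := exists_diffHalfPoch_eq_eval (n + 1) j
    have hperiodic (x : ℂ) : (P - Q).eval (x + 1) = (P - Q).eval x := by
      have hL := terminatingHyp2F1_add_one_sub n x c 2
      have hc : c + 1 = -(2 * n : ℂ) - (j + 1 : ℕ) := by push_cast [c]; ring
      have hκ : -(n + 1 : ℂ) * 2 / c = 2 * (n + 1) / (2 * n + j + 2) := by
        rw [← neg_div_neg_eq]
        push_cast [c]
        ring
      rw [hc, hκ, ih] at hL
      simp only [eval_sub, ← hP, ← hQ]
      linear_combination hL - diffHalfPoch_add_one_sub n j x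
    have h := (P - Q).eval_eq_eval_zero_of_eval_add_one hperiodic a
    simp only [eval_sub, ← hP, ← hQ, terminatingHyp2F1_at_zero, diffHalfPoch_at_zero] at h
    linear_combination h

theorem twoF1_negn_a_neg2nMj (n j : ℕ) (a : ℂ) :
    ∑ k ∈ range (n + 1),
        poch (-(n : ℂ)) k * poch a k * 2 ^ k /
          (poch (-(2 * n : ℂ) - j) k * (k.factorial : ℂ))
      = (2 : ℂ) ^ (2 * n + j) * (n.factorial : ℂ) / (((2 * n + j).factorial : ℂ)) *
          ∑ r ∈ range (j + 1),
            (-1 : ℂ) ^ r * (j.choose r : ℂ) * poch (a / 2 + 1 / 2 - r / 2) (n + j) := by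
  rw [← terminatingHyp2F1, terminatingHyp2F1_eq_diffHalfPoch, diffHalfPoch,
    fwdDiff_iter_sub_natCast_eq_sum]
  simp only [eval_halfPoch]
  congr 1
  refine sum_congr rfl fun r _ => ?_
  ring_nf
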